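/- arXiv:1611.07170 — 2 statements merged into one kernel-verified Lean document; each statement's English description precedes it below -/
import Mathlib

section
/- Let 𝐪 be a permutation of {0,...,k−1}. Then the number of inversions of 𝐪 equals |heads(𝐪)| − 1 and the number of consecutions of 𝐪 equals |heads(rev(𝐪))| − 1. Moreover, the set of indices at which 𝐪 has a consecution is {h ∈ {0,...,k−2} : h ∉ heads(𝐪)}, the set of indices at which 𝐪 has an inversion is {h ∈ {0,...,k−2} : h ∉ heads(rev(𝐪))}, and these two sets partition {0,...,k−2}. -/
/-- The Successor Infix Property: between any two equal indices of the tuple there is an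
occurrence of their successor. -/
def SIP (t : List ℕ) : Prop :=
  ∀ a b : Fin t.length, a < b → t.get a = t.get b →
    ∃ c : Fin t.length, a < c ∧ c < b ∧ t.get c = t.get a + 1

/-- One swap of two adjacent distinct commuting indices (indices differing by ≥ 2). -/
def CommuteStep (t t' : List ℕ) : Prop :=
  ∃ (u v : List ℕ) (x y : ℕ), x ≠ y ∧ x + 1 ≠ y ∧ y + 1 ≠ x ∧
    t = u ++ x :: y :: v ∧ t' = u ++ y :: x :: v

/-- Equivalence of index tuples: generated by swapping adjacent commuting indices. -/
def TupleEquiv : List ℕ → List ℕ → Prop := Relation.ReflTransGen CommuteStep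

/-- The string `(a : b) = (a, a+1, ..., b)`. -/
def strTuple (a b : ℕ) : List ℕ := List.range' a (b + 1 - a)

/-- The tuple `(a_s : b_s, ..., a_1 : b_1)` built from a list of pairs of endpoints. -/
def buildCSF (ps : List (ℕ × ℕ)) : List ℕ :=
  (ps.map fun p => strTuple p.1 p.2).flatten

/-- `ps` encodes a tuple in column standard form: each pair `(a_j, b_j)` has `a_j ≤ b_j`
and the heads `b_s > b_{s-1} > ... > b_1` are strictly decreasing. -/
def IsCSFDecomp (ps : List (ℕ × ℕ)) : Prop :=
  (∀ pr ∈ ps, pr.1 ≤ pr.2) ∧ List.Chain' (· > ·) (ps.map Prod.snd)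

/-- The set of heads of an index tuple `t`: the right endpoints of the strings of the
column standard form of `t`. -/
def headsSet (t : List ℕ) : Set ℕ :=
  {h | ∃ ps, IsCSFDecomp ps ∧ TupleEquiv t (buildCSF ps) ∧ h ∈ ps.map Prod.snd}

/-- The set of indices at which the permutation `q` of `{0,…,k-1}` has a consecution:
`i ∈ {0,…,k-2}` occurs to the left of `i+1` in `q`. -/
def consSet (k : ℕ) (q : List ℕ) : Finset ℕ :=
  (Finset.range (k - 1)).filter fun i => q.idxOf i < q.idxOf (i + 1)

/-- The set of indices at which the permutation `q` of `{0,…,k-1}` has an inversion: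
`i ∈ {0,…,k-2}` occurs to the right of `i+1` in `q`. -/
def invSet (k : ℕ) (q : List ℕ) : Finset ℕ :=
  (Finset.range (k - 1)).filter fun i => q.idxOf (i + 1) < q.idxOf i

/-! Commuting swaps never change the relative order of `i` and `i + 1`, so whether `q` has an
inversion at `i` can be read off its column standard form. There `i + 1` lies to the left of `i`
exactly when `i` is a head: otherwise `i + 1` follows `i` inside the same string, while if `i`
ends a string, `i + 1` lies in a string further left, since the heads decrease. The top index
`k - 1` is a head but not an inversion, and reversing `q` exchanges consecutions and
inversions. -/

open Finset

lemma mem_strTuple {a b z : ℕ} : z ∈ strTuple a b ↔ a ≤ z ∧ z ≤ b := by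
  simp only [strTuple, List.mem_range'_1]
  omega

lemma strTuple_append {a i b : ℕ} (hai : a ≤ i) (hib : i < b) :
    strTuple a i ++ strTuple (i + 1) b = strTuple a b := by
  have h := List.range'_append_1 (s := a) (m := i + 1 - a) (n := b - i)
  rwa [show a + (i + 1 - a) = i + 1 by omega, show i + 1 - a + (b - i) = b + 1 - a by omega,
    ← show b + 1 - (i + 1) = b - i by omega] at h

@[simp]
lemma buildCSF_cons (p : ℕ × ℕ) (ps : List (ℕ × ℕ)) :
    buildCSF (p :: ps) = strTuple p.1 p.2 ++ buildCSF ps := by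
  simp [buildCSF]

@[simp]
lemma buildCSF_append (ps ps' : List (ℕ × ℕ)) :
    buildCSF (ps ++ ps') = buildCSF ps ++ buildCSF ps' := by
  simp [buildCSF]

lemma mem_buildCSF {ps : List (ℕ × ℕ)} {z : ℕ} :
    z ∈ buildCSF ps ↔ ∃ p ∈ ps, p.1 ≤ z ∧ z ≤ p.2 := by
  simp [buildCSF, mem_strTuple]

namespace List

variable {α : Type*} [DecidableEq α]

lemma idxOf_lt_idxOf_append {l₁ l₂ : List α} {a b : α} (ha : a ∈ l₁) (hb : b ∉ l₁) :
    (l₁ ++ l₂).idxOf a < (l₁ ++ l₂).idxOf b := by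
  rw [idxOf_append_of_mem ha, idxOf_append_of_notMem hb]
  have := idxOf_lt_length_of_mem ha
  omega

lemma idxOf_lt_idxOf_iff_not_lt {l : List α} {a b : α} (ha : a ∈ l) (hab : a ≠ b) :
    l.idxOf b < l.idxOf a ↔ ¬l.idxOf a < l.idxOf b := by
  have : l.idxOf a ≠ l.idxOf b := fun h => hab ((idxOf_inj ha).1 h)
  omega

lemma idxOf_reverse {l : List α} (hl : l.Nodup) {a : α} (ha : a ∈ l) :
    l.reverse.idxOf a = l.length - 1 - l.idxOf a := by
  have hlt := idxOf_lt_length_of_mem ha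
  have hlt' : l.length - 1 - l.idxOf a < l.reverse.length := by rw [length_reverse]; omega
  have hget : l.reverse[l.length - 1 - l.idxOf a] = a := by
    rw [getElem_reverse]
    simp only [show l.length - 1 - (l.length - 1 - l.idxOf a) = l.idxOf a by omega]
    exact getElem_idxOf hlt
  conv_lhs => rw [← hget]
  exact (nodup_reverse.2 hl).idxOf_getElem _ hlt'

lemma idxOf_lt_idxOf_reverse_iff {l : List α} (hl : l.Nodup) {a b : α} (ha : a ∈ l)
    (hb : b ∈ l) : l.reverse.idxOf b < l.reverse.idxOf a ↔ l.idxOf a < l.idxOf b := by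
  rw [idxOf_reverse hl ha, idxOf_reverse hl hb]
  have := idxOf_lt_length_of_mem ha
  have := idxOf_lt_length_of_mem hb
  omega

end List

lemma CommuteStep.idxOf_lt_idxOf_succ_iff {t t' : List ℕ} (h : CommuteStep t t') (i : ℕ) :
    t.idxOf i < t.idxOf (i + 1) ↔ t'.idxOf i < t'.idxOf (i + 1) := by
  obtain ⟨u, v, x, y, hxy, hxy1, hyx1, rfl, rfl⟩ := h
  have hi : u.idxOf i < u.length ∨ i ∉ u := (em _).imp_left List.idxOf_lt_length_of_mem
  have hi1 : u.idxOf (i + 1) < u.length ∨ i + 1 ∉ u :=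
    (em _).imp_left List.idxOf_lt_length_of_mem
  simp only [List.idxOf_append, List.idxOf_cons, cond_eq_ite, beq_iff_eq]
  split_ifs <;> grind

lemma TupleEquiv.idxOf_lt_idxOf_succ_iff {t t' : List ℕ} (h : TupleEquiv t t') (i : ℕ) :
    t.idxOf i < t.idxOf (i + 1) ↔ t'.idxOf i < t'.idxOf (i + 1) := by
  induction h with
  | refl => rfl
  | tail _ hstep ih => exact ih.trans (hstep.idxOf_lt_idxOf_succ_iff i)

lemma TupleEquiv.perm {t t' : List ℕ} (h : TupleEquiv t t') : t.Perm t' := by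
  induction h with
  | refl => rfl
  | tail _ hstep ih =>
    obtain ⟨u, v, x, y, -, -, -, rfl, rfl⟩ := hstep
    exact ih.trans ((List.Perm.swap y x v).append_left u)

namespace IsCSFDecomp

variable {ps : List (ℕ × ℕ)}

lemma pairwise (hps : IsCSFDecomp ps) : ps.Pairwise fun p p' => p'.2 < p.2 :=
  List.pairwise_map.1 (List.isChain_iff_pairwise.1 hps.2)

lemma heads_nodup (hps : IsCSFDecomp ps) : (ps.map Prod.snd).Nodup :=
  List.pairwise_map.2 (hps.pairwise.imp ne_of_gt)

lemma head_mem_buildCSF (hps : IsCSFDecomp ps) {b : ℕ} (hb : b ∈ ps.map Prod.snd) :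
    b ∈ buildCSF ps := by
  obtain ⟨p, hp, rfl⟩ := List.mem_map.1 hb
  exact mem_buildCSF.2 ⟨p, hp, hps.1 p hp, le_rfl⟩

lemma idxOf_succ_lt_idxOf_of_mem_heads (hps : IsCSFDecomp ps) (hnd : (buildCSF ps).Nodup)
    {i : ℕ} (hi : i + 1 ∈ buildCSF ps) (hhead : i ∈ ps.map Prod.snd) :
    (buildCSF ps).idxOf (i + 1) < (buildCSF ps).idxOf i := by
  obtain ⟨p, hp, rfl⟩ := List.mem_map.1 hhead
  obtain ⟨r, hr, hr₁, hr₂⟩ := mem_buildCSF.1 hi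
  obtain ⟨u, v, rfl⟩ := List.append_of_mem hp
  have hru : r ∈ u := by
    have hpv := List.pairwise_cons.1 (List.pairwise_append.1 hps.pairwise).2.1
    rcases List.mem_append.1 hr with h | h | ⟨_, h⟩
    · exact h
    · omega
    · exact absurd (hpv.1 r h) (by omega)
  rw [buildCSF_append] at hnd ⊢
  have hpp : p.2 ∈ buildCSF (p :: v) :=
    mem_buildCSF.2 ⟨p, List.mem_cons_self, hps.1 p hp, le_rfl⟩
  exact List.idxOf_lt_idxOf_append (mem_buildCSF.2 ⟨r, hru, hr₁, hr₂⟩)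
    fun hpu => List.disjoint_of_nodup_append hnd hpu hpp

end IsCSFDecomp

lemma idxOf_lt_idxOf_succ_buildCSF_of_notMem_heads {ps : List (ℕ × ℕ)}
    (hnd : (buildCSF ps).Nodup) {i : ℕ} (hi : i ∈ buildCSF ps) (hhead : i ∉ ps.map Prod.snd) :
    (buildCSF ps).idxOf i < (buildCSF ps).idxOf (i + 1) := by
  obtain ⟨p, hp, hp₁, hp₂⟩ := mem_buildCSF.1 hi
  have hlt : i < p.2 := lt_of_le_of_ne hp₂ fun h => hhead (List.mem_map.2 ⟨p, hp, h.symm⟩)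
  obtain ⟨u, v, rfl⟩ := List.append_of_mem hp
  have hsplit : buildCSF (u ++ p :: v) =
      (buildCSF u ++ strTuple p.1 i) ++ (strTuple (i + 1) p.2 ++ buildCSF v) := by
    simp [← strTuple_append hp₁ hlt]
  rw [hsplit] at hnd ⊢
  refine List.idxOf_lt_idxOf_append (List.mem_append_right _ (mem_strTuple.2 ⟨hp₁, le_rfl⟩))
    fun hmem => List.disjoint_of_nodup_append hnd hmem
      (List.mem_append_left _ (mem_strTuple.2 ⟨le_rfl, hlt⟩))

section Permutation

variable {k : ℕ} {ps : List (ℕ × ℕ)}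

lemma idxOf_succ_lt_idxOf_buildCSF_iff (hps : IsCSFDecomp ps)
    (hperm : (buildCSF ps).Perm (List.range k)) {i : ℕ} (hi : i + 1 < k) :
    (buildCSF ps).idxOf (i + 1) < (buildCSF ps).idxOf i ↔ i ∈ ps.map Prod.snd := by
  have hnd : (buildCSF ps).Nodup := hperm.nodup_iff.2 List.nodup_range
  have hmem : ∀ {z}, z < k → z ∈ buildCSF ps := fun hz => hperm.mem_iff.2 (List.mem_range.2 hz)
  refine ⟨fun h => ?_, hps.idxOf_succ_lt_idxOf_of_mem_heads hnd (hmem hi)⟩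
  by_contra hhead
  exact (idxOf_lt_idxOf_succ_buildCSF_of_notMem_heads hnd (hmem (by omega)) hhead).asymm h

lemma TupleEquiv.idxOf_succ_lt_idxOf_iff_mem_heads {t : List ℕ} (hps : IsCSFDecomp ps)
    (ht : t.Perm (List.range k)) (hte : TupleEquiv t (buildCSF ps)) {i : ℕ} (hi : i + 1 < k) :
    t.idxOf (i + 1) < t.idxOf i ↔ i ∈ ps.map Prod.snd := by
  have hperm : (buildCSF ps).Perm (List.range k) := hte.perm.symm.trans ht
  have hit : i ∈ t := ht.mem_iff.2 (List.mem_range.2 (by omega))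
  rw [← idxOf_succ_lt_idxOf_buildCSF_iff hps hperm hi,
    List.idxOf_lt_idxOf_iff_not_lt hit (by omega),
    List.idxOf_lt_idxOf_iff_not_lt (hte.perm.subset hit) (by omega),
    hte.idxOf_lt_idxOf_succ_iff]

lemma TupleEquiv.invSet_eq_range_inter_heads {t : List ℕ} (hps : IsCSFDecomp ps)
    (ht : t.Perm (List.range k)) (hte : TupleEquiv t (buildCSF ps)) :
    invSet k t = range (k - 1) ∩ (ps.map Prod.snd).toFinset := by
  ext i
  simp only [invSet, mem_filter, mem_inter, mem_range, List.mem_toFinset]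
  exact and_congr_right fun hi => hte.idxOf_succ_lt_idxOf_iff_mem_heads hps ht (by omega)

lemma card_range_inter_heads_add_one (hk : 1 ≤ k) (hps : IsCSFDecomp ps)
    (hperm : (buildCSF ps).Perm (List.range k)) :
    #(range (k - 1) ∩ (ps.map Prod.snd).toFinset) + 1 = ps.length := by
  have hlt : ∀ b ∈ ps.map Prod.snd, b < k := fun b hb =>
    List.mem_range.1 (hperm.subset (hps.head_mem_buildCSF hb))
  have htop : k - 1 ∈ ps.map Prod.snd := by
    obtain ⟨p, hp, hp₁, hp₂⟩ :=
      mem_buildCSF.1 (hperm.symm.subset (List.mem_range.2 (by omega : k - 1 < k)))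
    have := hlt p.2 (List.mem_map_of_mem hp)
    exact List.mem_map.2 ⟨p, hp, by omega⟩
  have herase : range (k - 1) ∩ (ps.map Prod.snd).toFinset =
      (ps.map Prod.snd).toFinset.erase (k - 1) := by
    ext i
    simp only [mem_inter, mem_range, mem_erase, List.mem_toFinset]
    constructor
    · rintro ⟨hi, hh⟩
      exact ⟨by omega, hh⟩
    · rintro ⟨hi, hh⟩
      exact ⟨by have := hlt i hh; omega, hh⟩
  rw [herase, card_erase_add_one (List.mem_toFinset.2 htop),
    List.toFinset_card_of_nodup hps.heads_nodup, List.length_map]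

end Permutation

section ConsecutionsInversions

variable {k : ℕ} {q : List ℕ}

lemma consSet_eq_range_sdiff_invSet (hq : q.Perm (List.range k)) :
    consSet k q = range (k - 1) \ invSet k q := by
  rw [invSet, ← filter_not]
  refine filter_congr fun i hi => ?_
  rw [mem_range] at hi
  exact List.idxOf_lt_idxOf_iff_not_lt (hq.mem_iff.2 (List.mem_range.2 (by omega))) (by omega)

lemma invSet_reverse (hq : q.Perm (List.range k)) : invSet k q.reverse = consSet k q := by
  refine filter_congr fun i hi => ?_
  rw [mem_range] at hi
  exact List.idxOf_lt_idxOf_reverse_iff (hq.nodup_iff.2 List.nodup_range)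
    (hq.mem_iff.2 (List.mem_range.2 (by omega))) (hq.mem_iff.2 (List.mem_range.2 (by omega)))

lemma consSet_reverse (hq : q.Perm (List.range k)) : consSet k q.reverse = invSet k q := by
  simpa using (invSet_reverse ((List.reverse_perm q).trans hq)).symm

lemma TupleEquiv.consSet_eq_range_sdiff_heads {ps : List (ℕ × ℕ)} (hps : IsCSFDecomp ps)
    (hq : q.Perm (List.range k)) (hqe : TupleEquiv q (buildCSF ps)) :
    consSet k q = range (k - 1) \ (ps.map Prod.snd).toFinset := by
  rw [consSet_eq_range_sdiff_invSet hq, hqe.invSet_eq_range_inter_heads hps hq,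
    sdiff_inter_self_left]

lemma TupleEquiv.card_invSet_add_one {ps : List (ℕ × ℕ)} (hk : 1 ≤ k) (hps : IsCSFDecomp ps)
    (hq : q.Perm (List.range k)) (hqe : TupleEquiv q (buildCSF ps)) :
    #(invSet k q) + 1 = ps.length := by
  rw [hqe.invSet_eq_range_inter_heads hps hq]
  exact card_range_inter_heads_add_one hk hps (hqe.perm.symm.trans hq)

end ConsecutionsInversions

/-- Lemma: for a permutation `q` of `{0,…,k-1}`: the number of inversions of `q` is
`|heads(q)| - 1`, the number of consecutions is `|heads(rev q)| - 1`, the consecution set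
is `{h ∈ {0,…,k-2} : h ∉ heads(q)}`, the inversion set is
`{h ∈ {0,…,k-2} : h ∉ heads(rev q)}`, and these two sets partition `{0,…,k-2}`. -/
theorem consecutions_inversions_heads (k : ℕ) (hk : 1 ≤ k) (q : List ℕ)
    (hq : q.Perm (List.range k)) :
    ∀ ps ps', IsCSFDecomp ps → TupleEquiv q (buildCSF ps) →
      IsCSFDecomp ps' → TupleEquiv q.reverse (buildCSF ps') →
      (invSet k q).card + 1 = ps.length ∧
      (consSet k q).card + 1 = ps'.length ∧
      consSet k q = Finset.range (k - 1) \ (ps.map Prod.snd).toFinset ∧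
      invSet k q = Finset.range (k - 1) \ (ps'.map Prod.snd).toFinset ∧
      Disjoint (consSet k q) (invSet k q) ∧
      consSet k q ∪ invSet k q = Finset.range (k - 1) := by
  intro ps ps' hps hqe hps' hqe'
  have hqr : q.reverse.Perm (List.range k) := (List.reverse_perm q).trans hq
  have hpart := consSet_eq_range_sdiff_invSet hq
  refine ⟨hqe.card_invSet_add_one hk hps hq, ?_, hqe.consSet_eq_range_sdiff_heads hps hq, ?_,
    hpart ▸ sdiff_disjoint, ?_⟩
  · rw [← invSet_reverse hq]
    exact hqe'.card_invSet_add_one hk hps' hqr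
  · rw [← consSet_reverse hq]
    exact hqe'.consSet_eq_range_sdiff_heads hps' hqr
  · rw [hpart]
    exact sdiff_union_of_subset (filter_subset _ _)
end

section
/- Let 𝐭 be an index tuple in column standard form with indices from {0,...,k−1} and let 𝒳 be an n×n matrix assignment for 𝐭. View M_𝐭(𝒳) as a k×k block matrix with n×n blocks. Then every block-column of M_𝐭(𝒳) is of the form e_i ⊗ I_n for some 1 ≤ i ≤ k, except possibly the (k−h)-th block-column for each h ∈ heads(𝐭). -/
/-- The elementary matrix `M_i(B)` (`0 ≤ i ≤ k-1`), as a `k×k` block matrix with `n×n`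
blocks: for `i = 0` it is `I_{(k-1)n} ⊕ B`; for `1 ≤ i ≤ k-1` it is
`I_{(k-i-1)n} ⊕ [[B, I],[I, 0]] ⊕ I_{(i-1)n}`. -/
def elemP (F : Type*) [Field F] (k n : ℕ) (i : ℕ) (B : Matrix (Fin n) (Fin n) F) :
    Matrix (Fin k × Fin n) (Fin k × Fin n) F :=
  Matrix.of fun rc cc =>
    if (rc.1 : ℕ) + i + 1 = k ∧ (cc.1 : ℕ) + i + 1 = k then B rc.2 cc.2
    else if (rc.1 : ℕ) + i + 1 = k ∧ (cc.1 : ℕ) + i = k then (if rc.2 = cc.2 then 1 else 0)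
    else if (rc.1 : ℕ) + i = k ∧ (cc.1 : ℕ) + i + 1 = k then (if rc.2 = cc.2 then 1 else 0)
    else if (rc.1 : ℕ) + i = k ∧ (cc.1 : ℕ) + i = k then 0
    else if rc = cc then 1 else 0

/-- The elementary matrix `M_{-i}(B)` (`1 ≤ i ≤ k`), as a `k×k` block matrix with `n×n`
blocks: for `i = k` it is `B ⊕ I_{(k-1)n}`; for `1 ≤ i ≤ k-1` it is
`I_{(k-i-1)n} ⊕ [[0, I],[I, B]] ⊕ I_{(i-1)n}`. -/
def elemN (F : Type*) [Field F] (k n : ℕ) (i : ℕ) (B : Matrix (Fin n) (Fin n) F) :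
    Matrix (Fin k × Fin n) (Fin k × Fin n) F :=
  Matrix.of fun rc cc =>
    if (rc.1 : ℕ) + i = k ∧ (cc.1 : ℕ) + i = k then B rc.2 cc.2
    else if (rc.1 : ℕ) + i + 1 = k ∧ (cc.1 : ℕ) + i = k then (if rc.2 = cc.2 then 1 else 0)
    else if (rc.1 : ℕ) + i = k ∧ (cc.1 : ℕ) + i + 1 = k then (if rc.2 = cc.2 then 1 else 0)
    else if (rc.1 : ℕ) + i + 1 = k ∧ (cc.1 : ℕ) + i + 1 = k then 0
    else if rc = cc then 1 else 0

/-- The product `M_𝐭(𝒳) = M_{t₁}(X₁) ⋯ M_{t_r}(X_r)` of elementary matrices associated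
with the index tuple `t` and the matrix assignment `p ↦ Xf p`. -/
def buildProd (F : Type*) [Field F] (k n : ℕ) (t : List ℕ)
    (Xf : ℕ → Matrix (Fin n) (Fin n) F) : Matrix (Fin k × Fin n) (Fin k × Fin n) F :=
  ((List.range t.length).map fun p => elemP F k n (t.getD p 0) (Xf p)).prod

/-!
Block-column `c` of `M_𝐭(𝒳)` is the image of `e_c ⊗ Iₙ` under the factors, taken from right
to left. The factor `M_t(B)` moves `e_j ⊗ Iₙ` to `e_{j-1} ⊗ Iₙ` if `j = k - t`, destroys its
shape only if `j = k - t - 1`, and fixes it otherwise. A string `M_a ⋯ M_b` is met with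
decreasing indices, so it moves the column down by at most one and can destroy it only at its
head `b`. The heads increase from right to left: a column that has not moved is still `c`, which
avoids every `k - h - 1`, and a column that moved while passing a head `h` satisfies
`k ≤ j + h + 1`, so it lies beyond `k - b - 1` for every later head `b > h`.
-/

/-- Block-column `c` of `M` is `e_j ⊗ Iₙ`; for `j ≥ k` this says the block-column vanishes. -/
def IsUnitBlockCol {R : Type*} [Zero R] [One R] {k n : ℕ}
    (M : Matrix (Fin k × Fin n) (Fin k × Fin n) R) (c : Fin k) (j : ℕ) : Prop :=
  ∀ (r : Fin k) (α β : Fin n), M (r, α) (c, β) = if (r : ℕ) = j ∧ α = β then 1 else 0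

section UnitBlockCol

variable {R : Type*} [Semiring R] {k n : ℕ}

theorem isUnitBlockCol_one (c : Fin k) :
    IsUnitBlockCol (1 : Matrix (Fin k × Fin n) (Fin k × Fin n) R) c c := by
  intro r α β
  simp only [Matrix.one_apply, Prod.ext_iff, Fin.val_inj]

theorem IsUnitBlockCol.mul_left {A M : Matrix (Fin k × Fin n) (Fin k × Fin n) R} {c : Fin k}
    {j i : ℕ} (hM : IsUnitBlockCol M c j) (hj : j < k) (hA : IsUnitBlockCol A ⟨j, hj⟩ i) :
    IsUnitBlockCol (A * M) c i := by
  intro r α β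
  rw [Matrix.mul_apply, Finset.sum_eq_single ((⟨j, hj⟩ : Fin k), β), hM, hA]
  · simp
  · rintro ⟨s, γ⟩ - hne
    rw [hM, if_neg, mul_zero]
    rintro ⟨hs, rfl⟩
    exact hne (by simp [Fin.ext_iff, hs])
  · simp

end UnitBlockCol

section ElementaryProducts

variable {F : Type*} [Field F] {k n : ℕ}

theorem isUnitBlockCol_elemP {t j : ℕ} (B : Matrix (Fin n) (Fin n) F) (ht : t < k)
    (hj : j < k) (hbad : j + t + 1 ≠ k) :
    IsUnitBlockCol (elemP F k n t B) ⟨j, hj⟩ (if j + t = k then j - 1 else j) := by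
  intro r α β
  simp only [elemP, Matrix.of_apply, Prod.mk.injEq, Fin.ext_iff]
  by_cases hαβ : α = β
  · subst hαβ
    split_ifs <;> first | rfl | omega
  · have hαβ' : (α : ℕ) ≠ β := fun h => hαβ (Fin.ext h)
    simp only [hαβ', and_false, if_false]
    split_ifs <;> first | rfl | omega

theorem buildProd_nil (X : ℕ → Matrix (Fin n) (Fin n) F) : buildProd F k n [] X = 1 := by
  simp [buildProd]

theorem buildProd_cons (t : ℕ) (l : List ℕ) (X : ℕ → Matrix (Fin n) (Fin n) F) :
    buildProd F k n (t :: l) X = elemP F k n t (X 0) * buildProd F k n l (fun p => X (p + 1)) := by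
  rw [buildProd, List.length_cons, List.range_succ_eq_map, List.map_cons, List.prod_cons,
    List.map_map]
  rfl

theorem buildProd_append (u v : List ℕ) (X : ℕ → Matrix (Fin n) (Fin n) F) :
    buildProd F k n (u ++ v) X =
      buildProd F k n u X * buildProd F k n v (fun p => X (u.length + p)) := by
  induction u generalizing X with
  | nil => simp [buildProd_nil]
  | cons t u ih =>
    simp only [List.cons_append, buildProd_cons, ih, mul_assoc, List.length_cons,
      Nat.add_right_comm]

theorem strTuple_self (a : ℕ) : strTuple a a = [a] := by
  simp [strTuple]

theorem strTuple_eq_cons {a b : ℕ} (h : a < b) : strTuple a b = a :: strTuple (a + 1) b := by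
  rw [strTuple, strTuple, show b + 1 - a = (b + 1 - (a + 1)) + 1 by omega, List.range'_succ]

theorem IsUnitBlockCol.buildProd_strTuple_mul {M : Matrix (Fin k × Fin n) (Fin k × Fin n) F}
    {c : Fin k} {a b j : ℕ} (X : ℕ → Matrix (Fin n) (Fin n) F) (hab : a ≤ b) (hb : b < k)
    (hj : j < k) (hbad : j + b + 1 ≠ k) (hM : IsUnitBlockCol M c j) :
    IsUnitBlockCol (buildProd F k n (strTuple a b) X * M) c
      (if k ≤ j + b ∧ j + a ≤ k then j - 1 else j) := by
  obtain ⟨m, rfl⟩ := Nat.exists_eq_add_of_le hab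
  induction m generalizing a X with
  | zero =>
    simp only [Nat.add_zero] at *
    rw [strTuple_self, buildProd_cons, buildProd_nil, mul_one]
    convert hM.mul_left hj (isUnitBlockCol_elemP (X 0) (by omega) hj (by omega)) using 1
    split_ifs <;> omega
  | succ m ih =>
    have hstep := ih (a := a + 1) (fun p => X (p + 1)) (by omega) (by omega) (by omega)
    rw [show a + (m + 1) = a + 1 + m by omega, strTuple_eq_cons (by omega), buildProd_cons,
      mul_assoc]
    obtain ⟨j', hj'⟩ : ∃ j', j' = if k ≤ j + (a + 1 + m) ∧ j + (a + 1) ≤ k then j - 1 else j :=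
      ⟨_, rfl⟩
    rw [← hj'] at hstep
    have hj'k : j' < k := by split_ifs at hj' <;> omega
    have hbad' : j' + a + 1 ≠ k := by split_ifs at hj' <;> omega
    convert hstep.mul_left hj'k (isUnitBlockCol_elemP (X 0) (by omega) hj'k hbad') using 1
    split_ifs at hj' <;> split_ifs <;> omega

theorem isCSFDecomp_cons {pr : ℕ × ℕ} {ps : List (ℕ × ℕ)} :
    IsCSFDecomp (pr :: ps) ↔
      pr.1 ≤ pr.2 ∧ (∀ h ∈ ps.map Prod.snd, h < pr.2) ∧ IsCSFDecomp ps := by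
  constructor
  · rintro ⟨hle, hchain⟩
    obtain ⟨hlt, hpairwise⟩ := List.pairwise_cons.mp (List.isChain_iff_pairwise.mp hchain)
    exact ⟨hle pr List.mem_cons_self, hlt, fun q hq => hle q (List.mem_cons_of_mem _ hq),
      List.isChain_iff_pairwise.mpr hpairwise⟩
  · rintro ⟨hab, hlt, hle, hchain⟩
    exact ⟨List.forall_mem_cons.mpr ⟨hab, hle⟩, List.isChain_iff_pairwise.mpr
      (List.pairwise_cons.mpr ⟨hlt, List.isChain_iff_pairwise.mp hchain⟩)⟩

theorem exists_isUnitBlockCol_buildProd_buildCSF {ps : List (ℕ × ℕ)} (hps : IsCSFDecomp ps)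
    (hk : ∀ pr ∈ ps, pr.2 < k) (c : Fin k) (hc : ∀ h ∈ ps.map Prod.snd, (c : ℕ) + h + 1 ≠ k)
    (X : ℕ → Matrix (Fin n) (Fin n) F) :
    ∃ j ≤ (c : ℕ), (j = c ∨ ∃ h ∈ ps.map Prod.snd, k ≤ j + h + 1) ∧
      IsUnitBlockCol (buildProd F k n (buildCSF ps) X) c j := by
  induction ps generalizing X with
  | nil =>
    exact ⟨c, le_rfl, Or.inl rfl, by simpa [buildCSF, buildProd_nil] using isUnitBlockCol_one c⟩
  | cons pr ps ih =>
    obtain ⟨hab, hlt, hps'⟩ := isCSFDecomp_cons.mp hps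
    have hb : pr.2 < k := hk pr List.mem_cons_self
    obtain ⟨j, hjc, hmoved, hcol⟩ := ih hps' (fun q hq => hk q (List.mem_cons_of_mem _ hq))
      (fun h hh => hc h (List.mem_cons_of_mem _ hh))
      (fun p => X ((strTuple pr.1 pr.2).length + p))
    have hbad : j + pr.2 + 1 ≠ k := by
      rcases hmoved with rfl | ⟨h, hh, hkh⟩
      · exact hc pr.2 List.mem_cons_self
      · have := hlt h hh
        omega
    rw [show buildCSF (pr :: ps) = strTuple pr.1 pr.2 ++ buildCSF ps from rfl, buildProd_append]
    refine ⟨_, ?_, ?_, hcol.buildProd_strTuple_mul X hab hb (by omega) hbad⟩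
    · split_ifs <;> omega
    · split_ifs
      · exact Or.inr ⟨pr.2, List.mem_cons_self, by omega⟩
      · rcases hmoved with hjc | ⟨h, hh, hkh⟩
        · exact Or.inl hjc
        · exact Or.inr ⟨h, List.mem_cons_of_mem _ hh, hkh⟩

end ElementaryProducts

/-- Lemma: for a tuple `t` in column standard form (encoded by `ps`) with indices from
`{0,…,k-1}` and any matrix assignment, every block-column of `M_𝐭(𝒳)` is of the form
`e_i ⊗ Iₙ`, except possibly the `(k-h)`-th block-column for each head `h` of `t`. -/
theorem csf_product_block_columns (F : Type*) [Field F] (k n : ℕ)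
    (ps : List (ℕ × ℕ)) (hps : IsCSFDecomp ps) (hk : ∀ pr ∈ ps, pr.2 < k)
    (Xf : ℕ → Matrix (Fin n) (Fin n) F) :
    ∀ c : Fin k, (¬ ∃ h ∈ ps.map Prod.snd, (c : ℕ) + h + 1 = k) →
      ∃ i : Fin k, ∀ (r : Fin k) (α β : Fin n),
        buildProd F k n (buildCSF ps) Xf (r, α) (c, β) =
          if r = i ∧ α = β then 1 else 0 := by
  intro c hc
  obtain ⟨j, hjc, -, hcol⟩ := exists_isUnitBlockCol_buildProd_buildCSF hps hk c
    (fun h hh he => hc ⟨h, hh, he⟩) Xf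
  refine ⟨⟨j, hjc.trans_lt c.isLt⟩, fun r α β => ?_⟩
  rw [hcol r α β]
  simp [Fin.ext_iff]
end
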